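/- The unmerge of a grid point is the maximum of its merge fibre: for all a ∈ Grid_G, U_δ^G(a) = max { p ∈ ℝⁿ : M_δ^G(p) = M_δ^G(a) }, and consequently ‖U_δ^G(a) − Grid_G‖_∞ = δ. -/

import Mathlib

open Classical in
/-- One-dimensional merge function with respect to a finite grid. -/
noncomputable def mergeFn {k : ℕ} (G : Fin k → ℝ) (δ : ℝ) (x : ℝ) : ℝ :=
  if h : ∃ i, x ∈ Set.Icc (G i - δ) (G i + δ) then G h.choose else x

/-- Coordinatewise merge function on ℝⁿ. -/
noncomputable def mergeVec {n : ℕ} {k : Fin n → ℕ} (G : ∀ j, Fin (k j) → ℝ) (δ : ℝ)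
    (a : Fin n → ℝ) : Fin n → ℝ :=
  fun j => mergeFn (G j) δ (a j)

open Classical in
/-- The unmerge function `U_δ^G`. -/
noncomputable def unmergeFn {n : ℕ} {k : Fin n → ℕ} (G : ∀ j, Fin (k j) → ℝ) (δ : ℝ)
    (a : Fin n → ℝ) : Fin n → ℝ :=
  fun i => mergeVec G δ a i + if ∃ t, |a i - G i t| ≤ δ then δ else 0

/-- The grid `Grid_G`: the union of the axis-aligned hyperplanes through the grid. -/
def gridSet {n : ℕ} {k : Fin n → ℕ} (G : ∀ j, Fin (k j) → ℝ) : Set (Fin n → ℝ) :=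
  {a | ∃ j t, a j = G j t}

/-!
Everything happens coordinatewise. In one dimension, if the grid points are more than `2δ`
apart, the `δ`-windows around them are disjoint, so the merge fibre of a point `x` is either the
whole window `[g - δ, g + δ]` of the grid point `g` that `x` is merged to (maximum `g + δ`), or
the singleton `{x}` when `x` lies in no window (maximum `x`). In both cases the maximum lies at
distance at least `δ` from every grid point, and a grid point `a` is moved exactly `δ` away from
the grid value `a j` it shares with the grid.
-/

theorem isGreatest_univ_pi {ι : Type*} {π : ι → Type*} [∀ i, Preorder (π i)]
    {s : ∀ i, Set (π i)} {f : ∀ i, π i} (h : ∀ i, IsGreatest (s i) (f i)) :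
    IsGreatest (Set.univ.pi s) f :=
  ⟨fun i _ => (h i).1, fun _ hg i => (h i).2 (hg i trivial)⟩

section OneDim

variable {k : ℕ} {G : Fin k → ℝ} {δ x : ℝ}

theorem mergeFn_eq_of_abs_sub_le (hsep : ∀ s t, s ≠ t → 2 * δ < |G s - G t|) {i : Fin k}
    (h : |x - G i| ≤ δ) : mergeFn G δ x = G i := by
  have hex : ∃ j, x ∈ Set.Icc (G j - δ) (G j + δ) :=
    ⟨i, Set.mem_Icc_iff_abs_le.1 (by rwa [abs_sub_comm])⟩
  rw [mergeFn, dif_pos hex]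
  by_contra hne
  have hj : |G hex.choose - x| ≤ δ := Set.mem_Icc_iff_abs_le.2 hex.choose_spec
  have := hsep _ _ (fun e => hne (congrArg G e))
  have := abs_sub_le (G hex.choose) x (G i)
  linarith

theorem mergeFn_eq_self (h : ∀ t, δ < |x - G t|) : mergeFn G δ x = x := by
  rw [mergeFn, dif_neg]
  rintro ⟨t, ht⟩
  rw [← Set.mem_Icc_iff_abs_le, abs_sub_comm] at ht
  exact (h t).not_ge ht

open Classical in
noncomputable def unmergeFn₁ (G : Fin k → ℝ) (δ x : ℝ) : ℝ :=
  mergeFn G δ x + if ∃ t, |x - G t| ≤ δ then δ else 0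

theorem unmergeFn₁_eq_of_abs_sub_le (hsep : ∀ s t, s ≠ t → 2 * δ < |G s - G t|) {i : Fin k}
    (h : |x - G i| ≤ δ) : unmergeFn₁ G δ x = G i + δ := by
  rw [unmergeFn₁, mergeFn_eq_of_abs_sub_le hsep h, if_pos ⟨i, h⟩]

theorem unmergeFn₁_eq_self (h : ∀ t, δ < |x - G t|) : unmergeFn₁ G δ x = x := by
  rw [unmergeFn₁, mergeFn_eq_self h, if_neg (by simpa using h), add_zero]

theorem isGreatest_mergeFn_fiber_unmergeFn₁ (hsep : ∀ s t, s ≠ t → 2 * δ < |G s - G t|)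
    (hδ : 0 ≤ δ) : IsGreatest {y | mergeFn G δ y = mergeFn G δ x} (unmergeFn₁ G δ x) := by
  by_cases hx : ∃ t, |x - G t| ≤ δ
  · obtain ⟨t, ht⟩ := hx
    have hwindow : |G t + δ - G t| ≤ δ := by rwa [add_sub_cancel_left, abs_of_nonneg]
    rw [mergeFn_eq_of_abs_sub_le hsep ht, unmergeFn₁_eq_of_abs_sub_le hsep ht]
    refine ⟨mergeFn_eq_of_abs_sub_le hsep hwindow, fun y (hy : mergeFn G δ y = G t) => ?_⟩
    by_cases hy' : ∃ s, |y - G s| ≤ δ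
    · obtain ⟨s, hs⟩ := hy'
      rw [mergeFn_eq_of_abs_sub_le hsep hs] at hy
      rw [hy] at hs
      linarith [(abs_sub_le_iff.mp hs).1]
    · push Not at hy'
      rw [mergeFn_eq_self hy'] at hy
      exact absurd (hy' t) (by simpa [hy] using hδ)
  · push Not at hx
    rw [unmergeFn₁_eq_self hx]
    refine ⟨rfl, fun y (hy : mergeFn G δ y = mergeFn G δ x) => ?_⟩
    by_cases hy' : ∃ s, |y - G s| ≤ δ
    · obtain ⟨s, hs⟩ := hy'
      rw [mergeFn_eq_of_abs_sub_le hsep hs, mergeFn_eq_self hx] at hy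
      exact absurd (hx s) (by simpa [← hy] using hδ)
    · push Not at hy'
      rw [mergeFn_eq_self hy', mergeFn_eq_self hx] at hy
      exact hy.le

theorem le_abs_unmergeFn₁_sub (hsep : ∀ s t, s ≠ t → 2 * δ < |G s - G t|) (hδ : 0 ≤ δ)
    (t : Fin k) : δ ≤ |unmergeFn₁ G δ x - G t| := by
  by_cases hx : ∃ s, |x - G s| ≤ δ
  · obtain ⟨s, hs⟩ := hx
    rw [unmergeFn₁_eq_of_abs_sub_le hsep hs]
    rcases eq_or_ne s t with rfl | hst
    · rw [add_sub_cancel_left, abs_of_nonneg hδ]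
    · have := hsep s t hst
      have := abs_sub_le (G s) (G s + δ) (G t)
      rw [sub_add_cancel_left, abs_neg, abs_of_nonneg hδ] at this
      linarith
  · push Not at hx
    rw [unmergeFn₁_eq_self hx]
    exact (hx t).le

end OneDim

section Grid

variable {n : ℕ} {k : Fin n → ℕ} {G : ∀ j, Fin (k j) → ℝ}

theorem unmergeFn_apply (δ : ℝ) (a : Fin n → ℝ) (i : Fin n) :
    unmergeFn G δ a i = unmergeFn₁ (G i) δ (a i) :=
  rfl

theorem infDist_gridSet_le_abs_sub (x : Fin n → ℝ) (j : Fin n) (t : Fin (k j)) :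
    Metric.infDist x (gridSet G) ≤ |x j - G j t| := by
  have hmem : Function.update x j (G j t) ∈ gridSet G := ⟨j, t, Function.update_self ..⟩
  refine (Metric.infDist_le_dist_of_mem hmem).trans ((dist_pi_le_iff (abs_nonneg _)).2 fun i => ?_)
  rcases eq_or_ne i j with rfl | hij
  · rw [Function.update_self, Real.dist_eq]
  · rw [Function.update_of_ne hij, dist_self]
    exact abs_nonneg _

theorem le_infDist_gridSet {δ : ℝ} {x : Fin n → ℝ} (hne : (gridSet G).Nonempty)
    (h : ∀ j t, δ ≤ |x j - G j t|) : δ ≤ Metric.infDist x (gridSet G) := by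
  refine (Metric.le_infDist hne).2 fun y ⟨j, t, hy⟩ => ?_
  calc δ ≤ |x j - y j| := hy ▸ h j t
    _ = dist (x j) (y j) := (Real.dist_eq _ _).symm
    _ ≤ dist x y := dist_le_pi_dist x y j

end Grid

theorem unmerge_isGreatest_general {n : ℕ} {k : Fin n → ℕ}
    (G : ∀ j, Fin (k j) → ℝ)
    (c δ : ℝ) (hc : ∀ j s t, s ≠ t → c ≤ |G j s - G j t|) (hδ0 : 0 ≤ δ)
    (hδ : δ < c / 2)
    (a : Fin n → ℝ) (ha : a ∈ gridSet G) :
    IsGreatest {p : Fin n → ℝ | mergeVec G δ p = mergeVec G δ a} (unmergeFn G δ a) ∧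
    Metric.infDist (unmergeFn G δ a) (gridSet G) = δ := by
  have hsep : ∀ j s t, s ≠ t → 2 * δ < |G j s - G j t| := fun j s t hst => by
    linarith [hc j s t hst]
  have hfiber : {p : Fin n → ℝ | mergeVec G δ p = mergeVec G δ a} =
      Set.univ.pi fun i => {y | mergeFn (G i) δ y = mergeFn (G i) δ (a i)} := by
    ext p
    simp [mergeVec, funext_iff]
  obtain ⟨j, t, haj⟩ := ha
  have hUj : unmergeFn G δ a j = G j t + δ := by
    rw [unmergeFn_apply, unmergeFn₁_eq_of_abs_sub_le (hsep j) (i := t) (by simpa [haj] using hδ0)]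
  refine ⟨hfiber ▸ isGreatest_univ_pi fun i =>
    isGreatest_mergeFn_fiber_unmergeFn₁ (hsep i) hδ0, le_antisymm ?_ ?_⟩
  · calc Metric.infDist (unmergeFn G δ a) (gridSet G) ≤ |unmergeFn G δ a j - G j t| :=
          infDist_gridSet_le_abs_sub _ j t
      _ = δ := by rw [hUj, add_sub_cancel_left, abs_of_nonneg hδ0]
  · exact le_infDist_gridSet ⟨a, j, t, haj⟩ fun i s =>
      le_abs_unmergeFn₁_sub (hsep i) hδ0 s

/-- The unmerge of a grid point is the maximum of its merge fibre, and consequently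
it lies at sup-norm distance exactly `δ` from `Grid_G`. -/
theorem unmerge_isGreatest {n : ℕ} (hn : 0 < n) {k : Fin n → ℕ}
    (G : ∀ j, Fin (k j) → ℝ)
    (hG : ∀ j, Function.Injective (G j))
    (c δ : ℝ) (hc : ∀ j s t, s ≠ t → c ≤ |G j s - G j t|) (hδ0 : 0 ≤ δ)
    (hδ : δ < c / 2)
    (a : Fin n → ℝ) (ha : a ∈ gridSet G) :
    IsGreatest {p : Fin n → ℝ | mergeVec G δ p = mergeVec G δ a} (unmergeFn G δ a) ∧
    Metric.infDist (unmergeFn G δ a) (gridSet G) = δ :=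
  unmerge_isGreatest_general G c δ hc hδ0 hδ a ha
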